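/- arXiv:1209.5541 — 10 statements merged into one kernel-verified Lean document; each statement's English description precedes it below -/
import Mathlib

section
/- Fix p, q ∈ ℂ and set g₁(a,b,d,e) = a² − 2qab + q²b² − 2bd and g₂(a,b,d,e) = −2ae + d² − 2pde + p²e². Then every nonzero point (a,b,d,e) ∈ ℂ⁴ with g₁ = g₂ = 0 has the property that the gradient vectors ∇g₁ and ∇g₂ at that point are linearly independent over ℂ, if and only if pq ≠ 0 and pq ≠ 1/4. -/
/-!
If `∇g₁` and `∇g₂` are dependent at a zero `x ≠ 0`, either one of them vanishes, which together
with the other equation forces `x = 0` once `pq ≠ 0`, or neither coefficient of the relation is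
zero. In the latter case `∂g₁/∂b = ∂g₂/∂e = 0`, because `∇g₂` has no `b`-component and `∇g₁` no
`e`-component. In the coordinates `u = a - qb`, `v = d - pe` these two equations turn `g₁ = g₂ = 0`
into `u² + 2puv = v² + 2quv = 0`, which gives `(uv)²(1 - 4pq) = 0` and hence `u = v = 0`.

Conversely, for `p = 0` (resp. `q = 0`) the gradient `∇g₁` (resp. `∇g₂`) vanishes at a point of a
coordinate axis, and for `4pq = 1` the same computation run backwards gives the singular line
through `(-q, 1, 2q², -8q³)`.
-/

namespace TwoQuadrics

section Algebra

variable {R : Type*} [CommRing R] [NoZeroDivisors R] {p q u v : R}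

theorem eq_zero_and_eq_zero_of_sq_add_mul_eq_zero (hpq : 4*p*q ≠ 1)
    (hu : u^2 + 2*p*u*v = 0) (hv : v^2 + 2*q*u*v = 0) : u = 0 ∧ v = 0 := by
  have huv : (u*v)^2 * (1 - 4*p*q) = 0 := by linear_combination v^2 * hu - 2*p*u*v * hv
  replace huv : u*v = 0 := by simpa [sub_eq_zero, hpq.symm] using huv
  refine ⟨pow_eq_zero_iff two_ne_zero |>.1 ?_, pow_eq_zero_iff two_ne_zero |>.1 ?_⟩
  · linear_combination hu - 2*p*huv
  · linear_combination hv - 2*q*huv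

end Algebra

variable {K : Type*} [Field K] {p q a b d e : K}

def g₁ (q a b d : K) : K := a^2 - 2*q*a*b + q^2*b^2 - 2*b*d

def g₂ (p a d e : K) : K := -2*a*e + d^2 - 2*p*d*e + p^2*e^2

def gradG₁ (q a b d : K) : Fin 4 → K := ![2*a - 2*q*b, -2*q*a + 2*q^2*b - 2*d, -2*b, 0]

def gradG₂ (p a d e : K) : Fin 4 → K := ![-2*e, 0, 2*d - 2*p*e, -2*a - 2*p*d + 2*p^2*e]

def IsSmoothAwayFromOrigin (p q : K) : Prop :=
  ∀ a b d e : K, ¬(a = 0 ∧ b = 0 ∧ d = 0 ∧ e = 0) → g₁ q a b d = 0 → g₂ p a d e = 0 →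
    LinearIndependent K ![gradG₁ q a b d, gradG₂ p a d e]

theorem gradG₁_one : gradG₁ q a b d 1 = -2 * (q*(a - q*b) + d) := by
  simp only [gradG₁, Matrix.cons_val_one, Matrix.cons_val_zero]; ring

theorem gradG₂_three : gradG₂ p a d e 3 = -2 * (a + p*(d - p*e)) := by
  simp only [gradG₂, Matrix.cons_val]; ring

theorem gradG₁_eq_zero_iff [NeZero (2 : K)] : gradG₁ q a b d = 0 ↔ a = 0 ∧ b = 0 ∧ d = 0 := by
  refine ⟨fun h => ?_, by rintro ⟨rfl, rfl, rfl⟩; ext i; fin_cases i <;> simp [gradG₁]⟩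
  obtain rfl : b = 0 := by simpa [gradG₁, two_ne_zero] using congrFun h 2
  obtain rfl : a = 0 := by simpa [gradG₁, two_ne_zero] using congrFun h 0
  simpa [gradG₁, two_ne_zero] using congrFun h 1

theorem gradG₂_eq_zero_iff [NeZero (2 : K)] : gradG₂ p a d e = 0 ↔ a = 0 ∧ d = 0 ∧ e = 0 := by
  refine ⟨fun h => ?_, by rintro ⟨rfl, rfl, rfl⟩; ext i; fin_cases i <;> simp [gradG₂]⟩
  obtain rfl : e = 0 := by simpa [gradG₂, two_ne_zero] using congrFun h 0
  obtain rfl : d = 0 := by simpa [gradG₂, two_ne_zero] using congrFun h 2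
  simpa [gradG₂, two_ne_zero] using congrFun h 3

theorem eq_zero_of_gradG₁_one_of_gradG₂_three [NeZero (2 : K)] (hp : p ≠ 0) (hq : q ≠ 0)
    (hpq : 4*p*q ≠ 1) (h₁ : g₁ q a b d = 0) (h₂ : g₂ p a d e = 0)
    (hb : gradG₁ q a b d 1 = 0) (he : gradG₂ p a d e 3 = 0) :
    a = 0 ∧ b = 0 ∧ d = 0 ∧ e = 0 := by
  replace hb : q*(a - q*b) + d = 0 := by simpa [gradG₁_one, two_ne_zero] using hb
  replace he : a + p*(d - p*e) = 0 := by simpa [gradG₂_three, two_ne_zero] using he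
  obtain ⟨hu, hv⟩ := eq_zero_and_eq_zero_of_sq_add_mul_eq_zero (u := a - q*b) (v := d - p*e) hpq
    (by unfold g₁ at h₁; linear_combination -h₁ - 2*b*hb + 2*(a - q*b)*he)
    (by unfold g₂ at h₂; linear_combination -h₂ - 2*e*he + 2*(d - p*e)*hb)
  have ha : a = 0 := by linear_combination he - p*hv
  have hd : d = 0 := by linear_combination hb - q*hu
  refine ⟨ha, ?_, hd, ?_⟩
  · simpa [ha, hq] using hu
  · simpa [hd, hp] using hv

theorem isSmoothAwayFromOrigin_of_mul_ne_zero [NeZero (2 : K)] (hpq : p * q ≠ 0)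
    (h4pq : 4*p*q ≠ 1) : IsSmoothAwayFromOrigin p q := by
  obtain ⟨hp, hq⟩ := mul_ne_zero_iff.1 hpq
  intro a b d e hne h₁ h₂
  rw [LinearIndependent.pair_iff]
  intro s t hst
  by_contra hst0
  apply hne
  rcases eq_or_ne t 0 with rfl | ht
  · have hs : s ≠ 0 := fun hs => hst0 ⟨hs, rfl⟩
    obtain ⟨rfl, rfl, rfl⟩ := gradG₁_eq_zero_iff.1 (by simpa [hs] using hst)
    have hpe : (p*e)^2 = 0 := by unfold g₂ at h₂; linear_combination h₂
    simpa [hp] using hpe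
  rcases eq_or_ne s 0 with rfl | hs
  · obtain ⟨rfl, rfl, rfl⟩ := gradG₂_eq_zero_iff.1 (by simpa [ht] using hst)
    have hqb : (q*b)^2 = 0 := by unfold g₁ at h₁; linear_combination h₁
    simpa [hq] using hqb
  exact eq_zero_of_gradG₁_one_of_gradG₂_three hp hq h4pq h₁ h₂
    (by simpa [gradG₂, hs] using congrFun hst 1) (by simpa [gradG₁, ht] using congrFun hst 3)

theorem IsSmoothAwayFromOrigin.mul_ne_zero [NeZero (2 : K)] (h : IsSmoothAwayFromOrigin p q) :
    p * q ≠ 0 := by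
  intro hpq
  rcases mul_eq_zero.1 hpq with rfl | rfl
  · exact (h 0 0 0 1 (by simp) (by simp [g₁]) (by simp [g₂])).ne_zero 0
      (gradG₁_eq_zero_iff.2 ⟨rfl, rfl, rfl⟩)
  · exact (h 0 1 0 0 (by simp) (by simp [g₁]) (by simp [g₂])).ne_zero 1
      (gradG₂_eq_zero_iff.2 ⟨rfl, rfl, rfl⟩)

theorem IsSmoothAwayFromOrigin.four_mul_mul_ne_one (h : IsSmoothAwayFromOrigin p q) :
    4*p*q ≠ 1 := by
  intro hpq
  have hli := h (-q) 1 (2*q^2) (-8*q^3) (by simp) (by unfold g₁; ring)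
    (by unfold g₂; linear_combination 4*q^4*(4*p*q + 3) * hpq)
  have hrel : (4*q^2) • gradG₁ q (-q) 1 (2*q^2) + (1 : K) • gradG₂ p (-q) (2*q^2) (-8*q^3) = 0 := by
    ext i
    fin_cases i <;>
      simp only [gradG₁, gradG₂, Fin.zero_eta, Fin.mk_one, Fin.reduceFinMk, Matrix.cons_val,
        Pi.add_apply, Pi.smul_apply, smul_eq_mul, Pi.zero_apply]
    · ring
    · ring
    · linear_combination 4*q^2 * hpq
    · linear_combination -q*(4*p*q + 2) * hpq
  exact one_ne_zero (LinearIndependent.pair_iff.1 hli _ _ hrel).2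

theorem isSmoothAwayFromOrigin_iff [NeZero (2 : K)] :
    IsSmoothAwayFromOrigin p q ↔ p * q ≠ 0 ∧ 4*p*q ≠ 1 :=
  ⟨fun h => ⟨h.mul_ne_zero, h.four_mul_mul_ne_one⟩,
    fun h => isSmoothAwayFromOrigin_of_mul_ne_zero h.1 h.2⟩

end TwoQuadrics

theorem smooth_away_from_origin_iff (p q : ℂ) :
    (∀ a b d e : ℂ, ¬(a = 0 ∧ b = 0 ∧ d = 0 ∧ e = 0) →
      a^2 - 2*q*a*b + q^2*b^2 - 2*b*d = 0 →
      -2*a*e + d^2 - 2*p*d*e + p^2*e^2 = 0 →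
      LinearIndependent ℂ
        ![![2*a - 2*q*b, -2*q*a + 2*q^2*b - 2*d, -2*b, 0],
          ![-2*e, 0, 2*d - 2*p*e, -2*a - 2*p*d + 2*p^2*e]])
    ↔ (p * q ≠ 0 ∧ p * q ≠ 1/4) := by
  have hquarter : p * q = 1/4 ↔ 4*p*q = 1 :=
    ⟨fun h => by linear_combination 4*h, fun h => by linear_combination h/4⟩
  exact TwoQuadrics.isSmoothAwayFromOrigin_iff.trans (and_congr_right' (not_congr hquarter.symm))
end

section
/- For every integer m ≥ 1, the identity ∑_{i=3}^{m+2} C(m+2, i) · C(i−1, 2) = 2^{m−1}·(m² − m + 2) − 1 holds, where C(n,k) denotes the binomial coefficient. -/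
/-!
By Pascal's rule `C(i-1, 2) = C(i, 2) - C(i, 1) + C(i, 0)` for `i ≥ 1`, and
`∑ᵢ C(n, i) C(i, k) = C(n, k) 2^(n-k)` (choose the `k`-subset first, then any superset of it).
Hence `∑ᵢ C(n, i) C(i-1, 2) = C(n, 2) 2^(n-2) - n 2^(n-1) + 2^n - 1`, the `-1` coming from the
term `i = 0`, where the identity for `C(i-1, 2)` fails; for `n = m + 2` this is the right-hand side.
-/

open Finset

theorem Nat.sum_range_choose_mul_choose (n k : ℕ) :
    ∑ i ∈ range (n + 1), n.choose i * i.choose k = n.choose k * 2 ^ (n - k) := by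
  rcases lt_or_ge n k with hnk | hkn
  · rw [Nat.choose_eq_zero_of_lt hnk, zero_mul]
    exact sum_eq_zero fun i hi => by
      rw [Nat.choose_eq_zero_of_lt (n := i) (by grind), mul_zero]
  obtain ⟨d, rfl⟩ := Nat.exists_eq_add_of_le hkn
  rw [add_assoc, sum_range_add, sum_eq_zero fun i hi => by
      rw [Nat.choose_eq_zero_of_lt (mem_range.mp hi), mul_zero], zero_add,
    Nat.add_sub_cancel_left, ← Nat.sum_range_choose, mul_sum]
  refine sum_congr rfl fun j _ => ?_
  rw [Nat.choose_mul (Nat.le_add_right k j)]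
  simp

theorem cast_choose_two_eq_choose_succ (j : ℕ) :
    (j.choose 2 : ℤ) = (j + 1).choose 2 - (j + 1).choose 1 + (j + 1).choose 0 := by
  rw [Nat.choose_succ_succ' j 1]
  push_cast
  simp

theorem sum_range_choose_mul_choose_pred_two (n : ℕ) :
    ∑ i ∈ range (n + 1), (n.choose i * (i - 1).choose 2 : ℤ) + 1 =
      n.choose 2 * 2 ^ (n - 2) - n.choose 1 * 2 ^ (n - 1) + n.choose 0 * 2 ^ n := by
  have hterm (k : ℕ) : ∑ i ∈ range (n + 1), (n.choose i * i.choose k : ℤ) =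
      n.choose k * 2 ^ (n - k) := by exact_mod_cast Nat.sum_range_choose_mul_choose n k
  have hterm₀ : ∑ i ∈ range (n + 1), (n.choose i * i.choose 0 : ℤ) = n.choose 0 * 2 ^ n :=
    hterm 0
  rw [← hterm 2, ← hterm 1, ← hterm₀, ← sum_sub_distrib, ← sum_add_distrib, sum_range_succ',
    sum_range_succ', add_assoc]
  congr 1
  · refine sum_congr rfl fun j _ => ?_
    rw [Nat.add_sub_cancel, cast_choose_two_eq_choose_succ]
    ring
  · simp

theorem sum_range_choose_add_three_mul_choose_pred_two (n : ℕ) :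
    ∑ i ∈ range (n + 4), ((n + 3).choose i * (i - 1).choose 2 : ℤ) + 1 =
      2 ^ n * (n ^ 2 + n + 2) := by
  have hchoose : ((n + 3).choose 2 * 2 : ℤ) = (n + 3) * (n + 2) := by
    have := Nat.add_one_mul_choose_eq (n + 2) 1
    norm_num at this
    exact_mod_cast this.symm
  rw [sum_range_choose_mul_choose_pred_two, Nat.choose_one_right, Nat.choose_zero_right,
    show n + 3 - 2 = n + 1 by omega, show n + 3 - 1 = n + 2 by omega]
  push_cast
  linear_combination 2 ^ n * hchoose

theorem bjorner_welker_identity (m : ℕ) (hm : 1 ≤ m) :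
    ∑ i ∈ Finset.Icc 3 (m + 2), Nat.choose (m + 2) i * Nat.choose (i - 1) 2 =
      2 ^ (m - 1) * (m ^ 2 - m + 2) - 1 := by
  obtain ⟨n, rfl⟩ := Nat.exists_eq_add_of_le' hm
  have hsupport : ∑ i ∈ Icc 3 (n + 1 + 2), (n + 1 + 2).choose i * (i - 1).choose 2 =
      ∑ i ∈ range (n + 4), (n + 3).choose i * (i - 1).choose 2 := by
    refine sum_subset (fun i hi => by grind) fun i _ hi => ?_
    rw [Nat.choose_eq_zero_of_lt (n := i - 1) (by grind), mul_zero]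
  have hclosed : ∑ i ∈ range (n + 4), (n + 3).choose i * (i - 1).choose 2 + 1 =
      2 ^ n * (n ^ 2 + n + 2) := by
    exact_mod_cast sum_range_choose_add_three_mul_choose_pred_two n
  have hpoly : (n + 1) ^ 2 - (n + 1) + 2 = n ^ 2 + n + 2 := by grind
  rw [hsupport, hpoly, Nat.add_sub_cancel, ← hclosed, Nat.add_sub_cancel]
end

section
/- Let X and X' be n×n symmetric matrices over ℂ and assume X is diagonalizable. Then there exists P ∈ GL(n,ℂ) with P⁻¹ X P = X' if and only if there exists Q ∈ O(n,ℂ) (i.e. QᵀQ = I_n) with Qᵀ X Q = X'. -/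
/-!
If `R⁻¹ X R = D` is diagonal and `X` is symmetric, then `S = Rᵀ R` commutes with `D`, so `S` is
block diagonal along the eigenvalues of `D`. Over an algebraically closed field every symmetric
matrix is of the form `Tᵀ T` (take an orthogonal basis for its bilinear form and square roots of
the diagonal entries); applied block by block this gives such a `T` commuting with `D`, and then
`Q = R T⁻¹` is orthogonal with `Qᵀ X Q = D`. Since `X' = P⁻¹ X P` is conjugated to the same `D`
by `P⁻¹ R`, both `X` and `X'` are orthogonally congruent to `D`, hence to each other.
-/

open Matrix

section CommRing

variable {R : Type*} [CommRing R] {ι : Type*} [Fintype ι]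

theorem Matrix.commute_transpose_mul_self_of_mul_eq {X Y P : Matrix ι ι R} (hX : X.IsSymm)
    (hY : Y.IsSymm) (h : X * P = P * Y) : Commute (Pᵀ * P) Y := by
  have hPX : Pᵀ * X = Y * Pᵀ := by
    rw [← transpose_transpose (Pᵀ * X), transpose_mul, hX.eq, transpose_transpose, h,
      transpose_mul, hY.eq]
  calc Pᵀ * P * Y = Pᵀ * X * P := by rw [Matrix.mul_assoc, ← h, Matrix.mul_assoc]
    _ = Y * (Pᵀ * P) := by rw [hPX, Matrix.mul_assoc]

variable [DecidableEq ι]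

theorem Matrix.commute_diagonal_iff [NoZeroDivisors R] {A : Matrix ι ι R} {d : ι → R} :
    Commute A (diagonal d) ↔ ∀ i j, d i ≠ d j → A i j = 0 := by
  simp only [Commute, SemiconjBy, ← Matrix.ext_iff, mul_diagonal, diagonal_mul]
  refine forall₂_congr fun i j => ⟨fun h hd => ?_, fun h => ?_⟩
  · have : (d j - d i) * A i j = 0 := by linear_combination h
    exact (mul_eq_zero.mp this).resolve_left (sub_ne_zero.mpr (Ne.symm hd))
  · by_cases hd : d i = d j
    · rw [hd, mul_comm]
    · simp [h hd]

theorem Matrix.exists_orthogonal_conj_of_transpose_mul_self_eq {X Y P T : Matrix ι ι R}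
    (hT : IsUnit T.det) (hXP : X * P = P * Y) (hPT : Pᵀ * P = Tᵀ * T) (hTY : Commute T Y) :
    ∃ Q : Matrix ι ι R, Qᵀ * Q = 1 ∧ Qᵀ * X * Q = Y := by
  refine ⟨P * T⁻¹, ?_⟩
  have hQP : (P * T⁻¹)ᵀ * P = T := by
    rw [transpose_mul, transpose_nonsing_inv, Matrix.mul_assoc, hPT,
      nonsing_inv_mul_cancel_left _ _ (by rwa [det_transpose])]
  constructor
  · rw [← Matrix.mul_assoc, hQP, mul_nonsing_inv _ hT]
  · calc (P * T⁻¹)ᵀ * X * (P * T⁻¹) = (P * T⁻¹)ᵀ * P * Y * T⁻¹ := by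
          simp only [Matrix.mul_assoc, ← hXP]
      _ = Y := by rw [hQP, hTY.eq, mul_nonsing_inv_cancel_right _ _ hT]

theorem Matrix.mul_mul_transpose_eq_of_transpose_mul_mul_eq {Q A B : Matrix ι ι R}
    (hQ : Qᵀ * Q = 1) (h : Qᵀ * A * Q = B) : Q * B * Qᵀ = A := by
  have hQ' : Q * Qᵀ = 1 := mul_eq_one_comm.mp hQ
  rw [← h, Matrix.mul_assoc, Matrix.mul_assoc, hQ', Matrix.mul_one, ← Matrix.mul_assoc, hQ',
    Matrix.one_mul]

end CommRing

section IsAlgClosed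

variable {K : Type*} [Field K] [IsAlgClosed K] [Invertible (2 : K)]
  {ι : Type*} [Fintype ι] [DecidableEq ι]

theorem Matrix.IsSymm.exists_transpose_mul_self_eq {S : Matrix ι ι K} (hS : S.IsSymm) :
    ∃ T : Matrix ι ι K, Tᵀ * T = S := by
  set B := Matrix.toBilin' S
  obtain ⟨v, hv⟩ := LinearMap.BilinForm.exists_orthogonal_basis
    (LinearMap.BilinForm.isSymm_iff.mp (Matrix.isSymm_toBilin'_iff_isSymm.mpr hS))
  set c := v.reindex ((finCongr (Module.finrank_fintype_fun_eq_card K)).trans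
    (Fintype.equivFin ι).symm)
  have hc : LinearMap.BilinForm.toMatrix c B = diagonal fun i => B (c i) (c i) := by
    ext i j
    rw [LinearMap.BilinForm.toMatrix_apply, diagonal_apply]
    split_ifs with h
    · rw [h]
    · simp only [c, Module.Basis.reindex_apply]
      exact LinearMap.isOrthoᵢ_def.mp hv _ _ (by simpa using h)
  choose f hf using fun i => IsAlgClosed.exists_eq_mul_self (B (c i) (c i))
  refine ⟨diagonal f * c.toMatrix (Pi.basisFun K ι), ?_⟩
  have hB : LinearMap.BilinForm.toMatrix (Pi.basisFun K ι) B = S := by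
    simp [B, LinearMap.BilinForm.toMatrix_basisFun]
  rw [← hB, ← LinearMap.BilinForm.toMatrix_mul_basis_toMatrix c, hc]
  simp [hf, ← diagonal_mul_diagonal, Matrix.mul_assoc]

theorem Matrix.IsSymm.exists_transpose_mul_self_eq_of_commute_diagonal {S : Matrix ι ι K}
    (hS : S.IsSymm) {d : ι → K} (hSd : Commute S (diagonal d)) :
    ∃ T : Matrix ι ι K, Tᵀ * T = S ∧ Commute T (diagonal d) := by
  classical
  simp only [commute_diagonal_iff] at hSd ⊢
  let e := Equiv.sigmaFiberEquiv (Set.rangeFactorization d)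
  have hblock : S.submatrix e e = blockDiagonal' fun k => S.submatrix (e ⟨k, ·⟩) (e ⟨k, ·⟩) := by
    ext ⟨k, i⟩ ⟨k', j⟩
    by_cases hk : k = k'
    · subst hk
      rw [blockDiagonal'_apply_eq]
      rfl
    · rw [blockDiagonal'_apply_ne _ _ _ hk]
      exact hSd _ _ fun h => hk (i.2.symm.trans ((Subtype.ext h).trans j.2))
  choose T hT using fun k => (hS.submatrix (e ⟨k, ·⟩)).exists_transpose_mul_self_eq
  refine ⟨(blockDiagonal' T).submatrix e.symm e.symm, ?_, ?_⟩
  · rw [transpose_submatrix, submatrix_mul_equiv, blockDiagonal'_transpose, ← blockDiagonal'_mul]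
    simp only [hT, ← hblock, submatrix_submatrix, Equiv.self_comp_symm, submatrix_id_id]
  · intro i j hij
    exact blockDiagonal'_apply_ne T _ _ fun h => hij (congrArg Subtype.val h)

theorem Matrix.IsSymm.exists_orthogonal_conj_eq_diagonal {X P : Matrix ι ι K} (hX : X.IsSymm)
    (hP : IsUnit P.det) {d : ι → K} (hXd : P⁻¹ * X * P = diagonal d) :
    ∃ Q : Matrix ι ι K, Qᵀ * Q = 1 ∧ Qᵀ * X * Q = diagonal d := by
  have hXP : X * P = P * diagonal d := by
    rw [← hXd, Matrix.mul_assoc, mul_nonsing_inv_cancel_left _ _ hP]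
  obtain ⟨T, hTT, hTd⟩ := exists_transpose_mul_self_eq_of_commute_diagonal
    (isSymm_transpose_mul_self P) (commute_transpose_mul_self_of_mul_eq hX (isSymm_diagonal d) hXP)
  have hT : IsUnit T.det := by
    have hTT' : IsUnit (Tᵀ * T).det := by
      rw [hTT, det_mul, det_transpose]
      exact hP.mul hP
    rw [det_mul] at hTT'
    exact isUnit_of_mul_isUnit_right hTT'
  exact exists_orthogonal_conj_of_transpose_mul_self_eq hT hXP hTT.symm hTd

end IsAlgClosed

theorem symm_similar_iff_orthogonally_congruent (n : ℕ)
    (X X' : Matrix (Fin n) (Fin n) ℂ) (hX : X.IsSymm) (hX' : X'.IsSymm)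
    (hdiag : ∃ R : Matrix (Fin n) (Fin n) ℂ, IsUnit R.det ∧ (R⁻¹ * X * R).IsDiag) :
    (∃ P : Matrix (Fin n) (Fin n) ℂ, IsUnit P.det ∧ P⁻¹ * X * P = X') ↔
    (∃ Q : Matrix (Fin n) (Fin n) ℂ, Qᵀ * Q = 1 ∧ Qᵀ * X * Q = X') := by
  constructor
  · rintro ⟨P, hP, rfl⟩
    obtain ⟨R, hR, hD⟩ := hdiag
    have hPR : (P⁻¹ * R)⁻¹ * (P⁻¹ * X * P) * (P⁻¹ * R) = R⁻¹ * X * R := by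
      simp only [Matrix.mul_inv_rev, nonsing_inv_nonsing_inv _ hP, Matrix.mul_assoc,
        mul_nonsing_inv_cancel_left _ _ hP]
    obtain ⟨Q₁, hQ₁, hXQ₁⟩ := hX.exists_orthogonal_conj_eq_diagonal hR hD.diagonal_diag.symm
    obtain ⟨Q₂, hQ₂, hXQ₂⟩ := hX'.exists_orthogonal_conj_eq_diagonal
      (by rw [det_mul]; exact (isUnit_nonsing_inv_det _ hP).mul hR)
      (hPR.trans hD.diagonal_diag.symm)
    refine ⟨Q₁ * Q₂ᵀ, ?_, ?_⟩
    · rw [transpose_mul, transpose_transpose, Matrix.mul_assoc, ← Matrix.mul_assoc Q₁ᵀ, hQ₁,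
        Matrix.one_mul, mul_eq_one_comm.mp hQ₂]
    · calc (Q₁ * Q₂ᵀ)ᵀ * X * (Q₁ * Q₂ᵀ) = Q₂ * (Q₁ᵀ * X * Q₁) * Q₂ᵀ := by
            simp only [transpose_mul, transpose_transpose, Matrix.mul_assoc]
        _ = P⁻¹ * X * P := by
            rw [hXQ₁]
            exact mul_mul_transpose_eq_of_transpose_mul_mul_eq hQ₂ hXQ₂
  · rintro ⟨Q, hQ, rfl⟩
    exact ⟨Q, isUnit_det_of_left_inverse hQ, by rw [inv_eq_left_inv hQ]⟩
end

section
/- Let X, X', Y, Y' be n×n symmetric matrices over ℂ with X and X' invertible, and assume X⁻¹Y is diagonalizable. Then there exists P ∈ GL(n,ℂ) with PᵀXP = X' and PᵀYP = Y' if and only if the matrices X⁻¹Y and X'⁻¹Y' are similar (i.e. there exists S ∈ GL(n,ℂ) with S⁻¹(X⁻¹Y)S = X'⁻¹Y'). -/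
/-!
Congruence by `P` conjugates the pencil: `(PᵀXP)⁻¹(PᵀYP) = P⁻¹(X⁻¹Y)P`. Conversely, replacing
`(X, Y)` by `(SᵀXS, SᵀYS)` reduces to the case `X⁻¹Y = X'⁻¹Y' = A`. Then `U = X⁻¹X'` commutes
with `A` and satisfies `UᵀX = XU`, and so does every polynomial in `U`. An invertible matrix over
an algebraically closed field of characteristic `≠ 2` has a square root `T` that is a polynomial
in it: take `q` with `q² ≡ X` modulo the characteristic polynomial, found by Newton iteration at
each root and glued by the Chinese remainder theorem. Then `TᵀXT = XT² = X'` and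
`TᵀYT = XAT² = XUA = Y'`.
-/

open Matrix Polynomial

section SquareRootModulo

variable {R : Type*} [CommRing R]

theorem mul_dvd_sq_sub_of_newton_step {a b q u x : R} (hab : a ∣ b) (hb : b ∣ q ^ 2 - x)
    (hu : a ∣ 2 * q * u - 1) : a * b ∣ (q - (q ^ 2 - x) * u) ^ 2 - x := by
  have expand : (q - (q ^ 2 - x) * u) ^ 2 - x
      = (q ^ 2 - x) * -(2 * q * u - 1) + (q ^ 2 - x) * (q ^ 2 - x) * u ^ 2 := by ring
  rw [expand, mul_comm a b]
  exact dvd_add (mul_dvd_mul hb (dvd_neg.mpr hu))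
    (Dvd.dvd.mul_right (mul_dvd_mul hb (hab.trans hb)) _)

theorem exists_mul_dvd_sq_sub_of_isCoprime {a b q₁ q₂ x : R} (hab : IsCoprime a b)
    (ha : a ∣ q₁ ^ 2 - x) (hb : b ∣ q₂ ^ 2 - x) : ∃ q, a * b ∣ q ^ 2 - x := by
  obtain ⟨u, v, huv⟩ := id hab
  set q := q₁ * v * b + q₂ * u * a
  have hq₁ : a ∣ q - q₁ := ⟨(q₂ - q₁) * u, by linear_combination q₁ * huv⟩
  have hq₂ : b ∣ q - q₂ := ⟨(q₁ - q₂) * v, by linear_combination q₂ * huv⟩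
  refine ⟨q, hab.mul_dvd ?_ ?_⟩
  · rw [show q ^ 2 - x = (q + q₁) * (q - q₁) + (q₁ ^ 2 - x) by ring]
    exact dvd_add (hq₁.mul_left _) ha
  · rw [show q ^ 2 - x = (q + q₂) * (q - q₂) + (q₂ ^ 2 - x) by ring]
    exact dvd_add (hq₂.mul_left _) hb

end SquareRootModulo

namespace Polynomial

variable {K : Type*} [Field K] [IsAlgClosed K] [NeZero (2 : K)]

theorem exists_X_sub_C_pow_dvd_sq_sub_X {l : K} (hl : l ≠ 0) (m : ℕ) :
    ∃ q : K[X], (X - C l) ^ m ∣ q ^ 2 - X := by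
  obtain _ | m := m
  · exact ⟨0, by simp⟩
  induction m with
  | zero =>
    obtain ⟨c, hc⟩ := IsAlgClosed.exists_pow_nat_eq l two_pos
    exact ⟨C c, ⟨-1, by rw [← C_pow, hc]; ring⟩⟩
  | succ m ih =>
    obtain ⟨q, hq⟩ := ih
    have hql : q.eval l ^ 2 = l := by
      have := (dvd_iff_isRoot.mp ((dvd_pow_self _ m.succ_ne_zero).trans hq))
      simpa [sub_eq_zero] using this
    have hq0 : q.eval l ≠ 0 := by
      rintro h
      simp [h, eq_comm, hl] at hql
    have hu : X - C l ∣ 2 * q * C (2 * q.eval l)⁻¹ - 1 := by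
      rw [dvd_iff_isRoot]
      simp [mul_assoc, hq0, two_ne_zero]
    rw [pow_succ']
    exact ⟨_, mul_dvd_sq_sub_of_newton_step (dvd_pow_self _ m.succ_ne_zero) hq hu⟩

theorem exists_dvd_sq_sub_X {p : K[X]} (hp : ¬ X ∣ p) : ∃ q : K[X], p ∣ q ^ 2 - X := by
  induction p using UniqueFactorizationMonoid.induction_on_coprime with
  | h0 => exact absurd (dvd_zero X) hp
  | h1 hu => exact ⟨0, hu.dvd⟩
  | hpr i hprime =>
    obtain _ | i := i
    · exact ⟨0, by simp⟩
    obtain ⟨l, hl⟩ := IsAlgClosed.exists_root _ (degree_pos_of_irreducible hprime.irreducible).ne'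
    have hassoc : Associated (X - C l) _ :=
      (irreducible_X_sub_C l).associated_of_dvd hprime.irreducible (dvd_iff_isRoot.mpr hl)
    have hl0 : l ≠ 0 := by
      rintro rfl
      exact hp ((by simpa using hassoc.dvd : X ∣ _).trans (dvd_pow_self _ i.succ_ne_zero))
    obtain ⟨q, hq⟩ := exists_X_sub_C_pow_dvd_sq_sub_X hl0 (i + 1)
    exact ⟨q, (hassoc.pow_pow).dvd_iff_dvd_left.mp hq⟩
  | hcp hxy hx hy =>
    obtain ⟨q₁, hq₁⟩ := hx fun h ↦ hp (h.mul_right _)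
    obtain ⟨q₂, hq₂⟩ := hy fun h ↦ hp (h.mul_left _)
    exact exists_mul_dvd_sq_sub_of_isCoprime hxy.isCoprime hq₁ hq₂

end Polynomial

theorem Polynomial.aeval_mul_eq_mul_aeval {R A : Type*} [CommSemiring R] [Semiring A] [Algebra R A]
    {a b c : A} (h : a * c = c * b) (p : R[X]) : aeval a p * c = c * aeval b p := by
  induction p using Polynomial.induction_on' with
  | add p r hp hr => rw [map_add, map_add, add_mul, mul_add, hp, hr]
  | monomial k r =>
    have hk : a ^ k * c = c * b ^ k := (SemiconjBy.pow_right h.symm k).symm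
    rw [aeval_monomial, aeval_monomial, mul_assoc, hk, ← mul_assoc, Algebra.commutes, mul_assoc]

namespace Matrix

variable {n : Type*} [Fintype n]

theorem IsSymm.transpose_mul_mul {R : Type*} [CommSemiring R] {A : Matrix n n R} (hA : A.IsSymm)
    (P : Matrix n n R) : (Pᵀ * A * P).IsSymm := by
  simp only [IsSymm, transpose_mul, transpose_transpose, hA.eq, Matrix.mul_assoc]

theorem transpose_mul_eq_mul_of_isSymm {R : Type*} [CommSemiring R] {A B : Matrix n n R}
    (hA : A.IsSymm) (hAB : (A * B).IsSymm) : Bᵀ * A = A * B := by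
  rw [← hA.eq, ← transpose_mul, hA.eq, hAB.eq]

variable [DecidableEq n]

theorem transpose_aeval {R : Type*} [CommSemiring R] (M : Matrix n n R) (p : R[X]) :
    (aeval M p)ᵀ = aeval Mᵀ p := by
  apply MulOpposite.op_injective
  rw [← aeval_op_apply]
  exact (aeval_algHom_apply (transposeAlgEquiv n R R) M p).symm

theorem inv_mul_transpose_mul_mul {R : Type*} [CommRing R] {P : Matrix n n R} (hP : IsUnit P.det)
    (A B : Matrix n n R) : (Pᵀ * A * P)⁻¹ * (Pᵀ * B * P) = P⁻¹ * (A⁻¹ * B) * P := by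
  have hPt : IsUnit Pᵀ.det := by rwa [det_transpose]
  simp only [Matrix.mul_inv_rev, Matrix.mul_assoc, nonsing_inv_mul_cancel_left _ _ hPt]

variable {K : Type*} [Field K] [IsAlgClosed K] [NeZero (2 : K)]

theorem exists_aeval_sq_eq {M : Matrix n n K} (hM : IsUnit M.det) :
    ∃ q : K[X], aeval M q ^ 2 = M := by
  have hX : ¬ X ∣ M.charpoly := by
    rw [X_dvd_iff]
    intro h
    exact hM.ne_zero (by rw [det_eq_sign_charpoly_coeff, h, mul_zero])
  obtain ⟨q, c, hc⟩ := exists_dvd_sq_sub_X hX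
  refine ⟨q, sub_eq_zero.mp ?_⟩
  simpa [aeval_self_charpoly] using congrArg (aeval M) hc

theorem exists_congr_of_inv_mul_eq {X Y X' Y' : Matrix n n K} (hX : X.IsSymm) (hX' : X'.IsSymm)
    (hY : Y.IsSymm) (hY' : Y'.IsSymm) (hXu : IsUnit X.det) (hX'u : IsUnit X'.det)
    (h : X⁻¹ * Y = X'⁻¹ * Y') : ∃ T, IsUnit T.det ∧ Tᵀ * X * T = X' ∧ Tᵀ * Y * T = Y' := by
  set A := X⁻¹ * Y
  have hXA : X * A = Y := mul_nonsing_inv_cancel_left _ _ hXu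
  have hX'A : X' * A = Y' := by rw [h, mul_nonsing_inv_cancel_left _ _ hX'u]
  set U := X⁻¹ * X'
  have hXU : X * U = X' := mul_nonsing_inv_cancel_left _ _ hXu
  have hUA : U * A = A * U := calc
    U * A = X⁻¹ * (X' * A) := Matrix.mul_assoc _ _ _
    _ = X⁻¹ * (Aᵀ * X') := by rw [transpose_mul_eq_mul_of_isSymm hX' (hX'A ▸ hY')]
    _ = X⁻¹ * (Aᵀ * X) * U := by rw [← hXU]; simp only [Matrix.mul_assoc]
    _ = A * U := by
      rw [transpose_mul_eq_mul_of_isSymm hX (hXA ▸ hY), nonsing_inv_mul_cancel_left _ _ hXu]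
  have hUX : Uᵀ * X = X * U := transpose_mul_eq_mul_of_isSymm hX (hXU ▸ hX')
  obtain ⟨q, hq⟩ := exists_aeval_sq_eq (M := U) (by simpa [U] using hXu.mul hX'u)
  set T := aeval U q
  have hTA : T * A = A * T := aeval_mul_eq_mul_aeval hUA q
  have hTX : Tᵀ * X = X * T := by rw [transpose_aeval]; exact aeval_mul_eq_mul_aeval hUX q
  have hTT : T * T = U := by rw [← sq, hq]
  refine ⟨T, ?_, ?_, ?_⟩
  · rw [← isUnit_pow_iff two_ne_zero, ← det_pow, hq]
    simpa [U] using hXu.mul hX'u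
  · rw [hTX, Matrix.mul_assoc, hTT, hXU]
  · calc Tᵀ * Y * T = Tᵀ * X * A * T := by rw [← hXA, Matrix.mul_assoc Tᵀ X]
      _ = X * (T * A) * T := by rw [hTX, Matrix.mul_assoc X]
      _ = X * (A * U) := by rw [hTA, Matrix.mul_assoc, Matrix.mul_assoc, hTT]
      _ = Y' := by rw [← hUA, ← Matrix.mul_assoc, hXU, hX'A]

end Matrix

theorem pair_equivalent_iff_similar_general (n : ℕ)
    (X X' Y Y' : Matrix (Fin n) (Fin n) ℂ)
    (hX : X.IsSymm) (hX' : X'.IsSymm) (hY : Y.IsSymm) (hY' : Y'.IsSymm)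
    (hXu : IsUnit X.det) (hX'u : IsUnit X'.det) :
    (∃ P : Matrix (Fin n) (Fin n) ℂ, IsUnit P.det ∧ Pᵀ * X * P = X' ∧ Pᵀ * Y * P = Y') ↔
    (∃ S : Matrix (Fin n) (Fin n) ℂ, IsUnit S.det ∧ S⁻¹ * (X⁻¹ * Y) * S = X'⁻¹ * Y') := by
  constructor
  · rintro ⟨P, hP, rfl, rfl⟩
    exact ⟨P, hP, (inv_mul_transpose_mul_mul hP X Y).symm⟩
  · rintro ⟨S, hS, hsim⟩
    have hSXu : IsUnit (Sᵀ * X * S).det := by simpa using (hS.mul hXu).mul hS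
    obtain ⟨T, hT, hTX, hTY⟩ := exists_congr_of_inv_mul_eq (hX.transpose_mul_mul S) hX'
      (hY.transpose_mul_mul S) hY' hSXu hX'u (by rw [inv_mul_transpose_mul_mul hS, hsim])
    refine ⟨S * T, by simpa using hS.mul hT, ?_, ?_⟩
    · rw [← hTX]; simp only [transpose_mul, Matrix.mul_assoc]
    · rw [← hTY]; simp only [transpose_mul, Matrix.mul_assoc]

theorem pair_equivalent_iff_similar (n : ℕ)
    (X X' Y Y' : Matrix (Fin n) (Fin n) ℂ)
    (hX : X.IsSymm) (hX' : X'.IsSymm) (hY : Y.IsSymm) (hY' : Y'.IsSymm)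
    (hXu : IsUnit X.det) (hX'u : IsUnit X'.det)
    (hdiag : ∃ R : Matrix (Fin n) (Fin n) ℂ, IsUnit R.det ∧ (R⁻¹ * (X⁻¹ * Y) * R).IsDiag) :
    (∃ P : Matrix (Fin n) (Fin n) ℂ, IsUnit P.det ∧ Pᵀ * X * P = X' ∧ Pᵀ * Y * P = Y') ↔
    (∃ S : Matrix (Fin n) (Fin n) ℂ, IsUnit S.det ∧ S⁻¹ * (X⁻¹ * Y) * S = X'⁻¹ * Y') :=
  pair_equivalent_iff_similar_general n X X' Y Y' hX hX' hY hY' hXu hX'u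
end

section
/- Let X and Y be 4×4 symmetric matrices over ℂ. If det(aX + bY) = 0 for all a, b ∈ ℂ, then there exists a nonzero vector v ∈ ℂ⁴ such that vᵀXv = 0, vᵀYv = 0, and the vectors Xv and Yv are linearly dependent over ℂ (consequently every scalar multiple λv lies on the common zero locus of the two quadrics and is a singular point of it, so the locus is not an isolated surface singularity). -/
open Matrix

/-- If `X *ᵥ v = 0` and `v ⬝ᵥ (Y *ᵥ v) = 0` for a nonzero `v`, the conclusion holds. -/
lemma singular_pencil_aux_conclude (X Y : Matrix (Fin 4) (Fin 4) ℂ) (v : Fin 4 → ℂ)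
    (hv : v ≠ 0) (h1 : X *ᵥ v = 0) (h2 : v ⬝ᵥ (Y *ᵥ v) = 0) :
    ∃ v : Fin 4 → ℂ, v ≠ 0 ∧ v ⬝ᵥ (X *ᵥ v) = 0 ∧ v ⬝ᵥ (Y *ᵥ v) = 0 ∧
      ¬ LinearIndependent ℂ ![X *ᵥ v, Y *ᵥ v] := by
  refine ⟨v, hv, by rw [h1, dotProduct_zero], h2, fun hli => ?_⟩
  have := (linearIndependent_fin2.mp hli).2 0
  simp [h1] at this

lemma singular_pencil_aux_updateCol {n : Type*} [Fintype n] [DecidableEq n]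
    (M : Matrix n n ℂ) (j : n) (b z : n → ℂ) :
    (M.updateCol j b) *ᵥ z = M *ᵥ (Function.update z j 0) + (z j) • b := by
  funext i
  simp only [mulVec, dotProduct, updateCol_apply, Pi.add_apply, Pi.smul_apply,
    smul_eq_mul, Function.update_apply]
  have hterm : ∀ k, (if k = j then b i else M i k) * z k
      = M i k * (if k = j then 0 else z k) + (if k = j then z j * b i else 0) := by
    intro k; split_ifs with hk
    · subst hk; ring
    · ring
  simp_rw [hterm, Finset.sum_add_distrib, Finset.sum_ite_eq' Finset.univ j,
    Finset.mem_univ, if_true]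

theorem singular_pencil_not_isolated (X Y : Matrix (Fin 4) (Fin 4) ℂ)
    (hX : X.IsSymm) (hY : Y.IsSymm)
    (h : ∀ a b : ℂ, (a • X + b • Y).det = 0) :
    ∃ v : Fin 4 → ℂ, v ≠ 0 ∧ v ⬝ᵥ (X *ᵥ v) = 0 ∧ v ⬝ᵥ (Y *ᵥ v) = 0 ∧
      ¬ LinearIndependent ℂ ![X *ᵥ v, Y *ᵥ v] := by
  classical
  set P : Matrix (Fin 4) (Fin 4) (Polynomial ℂ) :=
    X.map Polynomial.C + (Polynomial.X : Polynomial ℂ) • Y.map Polynomial.C with hPdef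
  have hmapP : ∀ t : ℂ, (Polynomial.evalRingHom t).mapMatrix P = X + t • Y := by
    intro t; ext i j
    rw [RingHom.mapMatrix_apply]
    simp only [hPdef, Matrix.map_apply, Matrix.add_apply, Matrix.smul_apply, smul_eq_mul,
      Polynomial.eval_add, Polynomial.eval_mul, Polynomial.eval_C, Polynomial.eval_X,
      Polynomial.coe_evalRingHom]
  have hdet : P.det = 0 := by
    refine Polynomial.funext fun t => ?_
    have h1 := RingHom.map_det (Polynomial.evalRingHom t) P
    have h2 := h 1 t
    rw [one_smul] at h2
    rw [Polynomial.eval_zero]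
    calc Polynomial.eval t P.det = ((Polynomial.evalRingHom t).mapMatrix P).det := h1
    _ = 0 := by rw [hmapP t, h2]
  set A := P.adjugate with hAdef
  have hAP : A * P = 0 := by rw [hAdef, Matrix.adjugate_mul, hdet, zero_smul]
  have hd : ∀ (M N : Matrix (Fin 4) (Fin 4) (Polynomial ℂ)),
      (M * N).map (⇑Polynomial.derivative)
        = M.map (⇑Polynomial.derivative) * N + M * N.map (⇑Polynomial.derivative) := by
    intro M N; ext i j
    simp only [Matrix.map_apply, Matrix.mul_apply, Matrix.add_apply]
    rw [map_sum Polynomial.derivative _ Finset.univ]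
    simp_rw [Polynomial.derivative_mul]
    rw [Finset.sum_add_distrib]
  have hPd : P.map (⇑Polynomial.derivative) = Y.map Polynomial.C := by
    ext i j
    simp [hPdef, Matrix.map_apply, Matrix.add_apply, Matrix.smul_apply, smul_eq_mul,
      Polynomial.derivative_mul]
  have key : A.map (⇑Polynomial.derivative) * P + A * Y.map Polynomial.C = 0 := by
    have h0 := hd A P
    rw [hAP, hPd] at h0
    rw [← h0, Matrix.map_zero]
    exact map_zero _
  by_cases hA : A = 0
  · -- all adjugates vanish; in particular adjugate X = 0, so ker X is "big".
    have hadjX : X.adjugate = 0 := by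
      have h0 := RingHom.map_adjugate (Polynomial.evalRingHom 0) P
      rw [hmapP 0, ← hAdef, hA] at h0
      have : X + (0:ℂ) • Y = X := by rw [zero_smul, add_zero]
      rw [this] at h0
      rw [← h0]
      exact map_zero _
    have hdetX : X.det = 0 := by
      have := h 1 0; rw [one_smul, zero_smul, add_zero] at this; exact this
    obtain ⟨v, hv, hXv⟩ := (Matrix.exists_mulVec_eq_zero_iff).mpr hdetX
    by_cases hw : ∃ w, X *ᵥ w = 0 ∧ ∀ c : ℂ, w ≠ c • v
    · obtain ⟨w, hXw, hwv⟩ := hw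
      by_cases ha : v ⬝ᵥ (Y *ᵥ v) = 0
      · exact singular_pencil_aux_conclude X Y v hv hXv ha
      by_cases hq : w ⬝ᵥ (Y *ᵥ w) = 0
      · exact singular_pencil_aux_conclude X Y w
          (fun h0 => hwv 0 (by rw [h0, zero_smul])) hXw hq
      · set a := v ⬝ᵥ (Y *ᵥ v) with hadef
        set bq := v ⬝ᵥ (Y *ᵥ w) + w ⬝ᵥ (Y *ᵥ v) with hbqdef
        set dq := w ⬝ᵥ (Y *ᵥ w) with hdqdef
        obtain ⟨r, hr⟩ := IsAlgClosed.exists_pow_nat_eq (k := ℂ) (bq ^ 2 - 4 * a * dq)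
          (n := 2) (by norm_num)
        set c := (-bq + r) / (2 * a) with hcdef
        have hexp : (c • v + w) ⬝ᵥ (Y *ᵥ (c • v + w)) = a * c ^ 2 + bq * c + dq := by
          rw [hadef, hbqdef, hdqdef]
          simp only [Matrix.mulVec_add, Matrix.mulVec_smul, dotProduct_add,
            add_dotProduct, smul_dotProduct, dotProduct_smul, smul_eq_mul]
          ring
        have hc0 : a * c ^ 2 + bq * c + dq = 0 := by
          have ha' : a ≠ 0 := ha
          have hfrac : a * c ^ 2 + bq * c + dq = (r ^ 2 - (bq ^ 2 - 4 * a * dq)) / (4 * a) := by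
            rw [hcdef]; field_simp; ring
          rw [hfrac, hr, sub_self, zero_div]
        refine singular_pencil_aux_conclude X Y (c • v + w) ?_ ?_ (hexp.trans hc0)
        · intro h0
          exact hwv (-c) (by rw [eq_neg_of_add_eq_zero_right h0, neg_smul])
        · rw [Matrix.mulVec_add, Matrix.mulVec_smul, hXv, hXw, smul_zero, add_zero]
    · push_neg at hw
      exfalso
      have hnsurj : ¬ Function.Surjective (X.mulVecLin) := by
        intro hs
        have hinj := LinearMap.injective_iff_surjective.mpr hs
        apply hv
        have : X.mulVecLin v = X.mulVecLin 0 := by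
          simp [Matrix.mulVecLin_apply, hXv]
        exact hinj this
      obtain ⟨b, hb⟩ : ∃ b, ∀ z, X *ᵥ z ≠ b := by
        by_contra hc; push_neg at hc
        exact hnsurj fun b => by
          obtain ⟨z, hz⟩ := hc b
          exact ⟨z, by simpa [Matrix.mulVecLin_apply] using hz⟩
      obtain ⟨j0, hj0⟩ : ∃ j0, v j0 ≠ 0 := by
        by_contra hc; push_neg at hc; exact hv (funext hc)
      have hker : ∀ z, (X.updateCol j0 b) *ᵥ z = 0 → z = 0 := by
        intro z hz
        rw [singular_pencil_aux_updateCol] at hz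
        rcases eq_or_ne (z j0) 0 with hz0 | hz0
        · rw [hz0, zero_smul, add_zero] at hz
          have hupd : Function.update z j0 0 = z := by
            funext k
            rw [Function.update_apply]
            split_ifs with hk
            · rw [hk, hz0]
            · rfl
          rw [hupd] at hz
          obtain ⟨cz, hcz⟩ := hw z hz
          have : cz = 0 := by
            have := congrFun hcz j0
            rw [hz0] at this
            have h0 : cz * v j0 = 0 := this.symm
            rcases mul_eq_zero.mp h0 with h | h
            · exact h
            · exact absurd h hj0
          rw [hcz, this, zero_smul]
        · exfalso
          apply hb ((z j0)⁻¹ • (-(Function.update z j0 0)))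
          have hXu : X *ᵥ (-(Function.update z j0 0)) = (z j0) • b := by
            rw [Matrix.mulVec_neg]
            exact (eq_neg_of_add_eq_zero_right hz).symm
          rw [Matrix.mulVec_smul, hXu, smul_smul, inv_mul_cancel₀ hz0, one_smul]
      have hdet' : (X.updateCol j0 b).det ≠ 0 := by
        intro h0
        obtain ⟨z, hz, hz0⟩ := Matrix.exists_mulVec_eq_zero_iff.mpr h0
        exact hz (hker z hz0)
      apply hdet'
      have h1 : (X.updateCol j0 b).det = X.cramer b j0 := (Matrix.cramer_apply X b j0).symm
      rw [h1, Matrix.cramer_eq_adjugate_mulVec, hadjX]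
      simp
  · obtain ⟨i1, j1, hij⟩ : ∃ i j, A i j ≠ 0 := by
      by_contra hc; push_neg at hc
      exact hA (by ext i j; rw [hc i j]; rfl)
    obtain ⟨t0, ht0⟩ : ∃ t, (A i1 j1).eval t ≠ 0 := by
      by_contra hc; push_neg at hc
      exact hij (Polynomial.funext fun t => by rw [hc t, Polynomial.eval_zero])
    set Z := X + t0 • Y with hZdef
    have hdetZ : Z.det = 0 := by
      have := h 1 t0; rw [one_smul] at this; exact this
    have hZsymm : Zᵀ = Z := by
      rw [hZdef, Matrix.transpose_add, Matrix.transpose_smul, hX.eq, hY.eq]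
    set B := Z.adjugate with hBdef
    have hφA : (Polynomial.evalRingHom t0).mapMatrix A = B := by
      rw [hAdef, RingHom.map_adjugate, hmapP t0, hBdef]
    have hBsymm : Bᵀ = B := by
      rw [hBdef, Matrix.adjugate_transpose, hZsymm]
    have hB1 : B i1 j1 ≠ 0 := by
      rw [← hφA, RingHom.mapMatrix_apply, Matrix.map_apply]
      exact ht0
    have hBZ : B * Z = 0 := by
      have h0 := congrArg ((Polynomial.evalRingHom t0).mapMatrix) hAP
      rw [_root_.map_mul, hφA, hmapP t0, ← hZdef, _root_.map_zero] at h0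
      exact h0
    have hφC : (Polynomial.evalRingHom t0).mapMatrix (Y.map Polynomial.C) = Y := by
      ext i j; simp [RingHom.mapMatrix_apply, Matrix.map_apply]
    have hBY : B * Y = - ((Polynomial.evalRingHom t0).mapMatrix
        (A.map (⇑Polynomial.derivative)) * Z) := by
      have h0 := congrArg ((Polynomial.evalRingHom t0).mapMatrix) key
      rw [_root_.map_add, _root_.map_mul, _root_.map_mul, hφA, hφC, hmapP t0, ← hZdef, _root_.map_zero] at h0
      exact eq_neg_of_add_eq_zero_right h0
    set v := fun i => B i j1 with hvdef
    have hv : v ≠ 0 := by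
      intro h0
      exact hB1 (congrFun h0 i1)
    have hZB : Z * B = 0 := by rw [hBdef, Matrix.mul_adjugate, hdetZ, zero_smul]
    have hZv : Z *ᵥ v = 0 := by
      funext i
      have h0 := congrFun (congrFun hZB i) j1
      simpa [Matrix.mul_apply, Matrix.mulVec, dotProduct, hvdef] using h0
    have hYv0 : v ⬝ᵥ (Y *ᵥ v) = 0 := by
      have h1 : B *ᵥ (Y *ᵥ v) = 0 := by
        rw [Matrix.mulVec_mulVec, hBY, Matrix.neg_mulVec, ← Matrix.mulVec_mulVec, hZv,
          Matrix.mulVec_zero, neg_zero]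
      have h2 := congrFun h1 j1
      calc v ⬝ᵥ (Y *ᵥ v) = (B *ᵥ (Y *ᵥ v)) j1 := by
            simp only [Matrix.mulVec, dotProduct, hvdef]
            refine Finset.sum_congr rfl fun k _ => ?_
            have hsym : B k j1 = B j1 k := by
              conv_lhs => rw [← hBsymm]
              rw [Matrix.transpose_apply]
            rw [hsym]
        _ = 0 := h2
    have hXv : X *ᵥ v = (-t0) • (Y *ᵥ v) := by
      have h0 : X *ᵥ v + t0 • (Y *ᵥ v) = 0 := by
        rw [← Matrix.smul_mulVec, ← Matrix.add_mulVec, ← hZdef, hZv]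
      rw [neg_smul]
      exact eq_neg_of_add_eq_zero_left h0
    refine ⟨v, hv, ?_, hYv0, fun hli => ?_⟩
    · rw [hXv, dotProduct_smul, hYv0, smul_zero]
    · refine (linearIndependent_fin2.mp hli).2 (-t0) ?_
      simpa using hXv.symm
end

section
/- Let A be a 4×4 symmetric matrix over ℂ and let α ∈ ℂ be a root of the characteristic polynomial of A of multiplicity at least 2. Then there exists a nonzero vector v ∈ ℂ⁴ with Av = α·v and vᵀv = 0. -/
/-!
Put `B = A - α`. If `ker B² ≠ ker B`, pick `u` with `B² u = 0 ≠ B u`; then `v = B u` is an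
eigenvector and, `B` being symmetric, `vᵀv = uᵀ B² u = 0`. Otherwise the generalized eigenspace
of `α` is the eigenspace, whose dimension is then the multiplicity of `α`, at least `2`; and the
quadratic form `vᵀv` has a nontrivial zero on any plane over an algebraically closed field.
-/

open Matrix Polynomial Module

theorem Submodule.exists_ne_zero_dotProduct_self_eq_zero {K n : Type*} [Field K] [IsAlgClosed K]
    [Fintype n] (W : Submodule K (n → K)) (hW : 2 ≤ finrank K W) :
    ∃ v ∈ W, v ≠ 0 ∧ v ⬝ᵥ v = 0 := by
  have : Nontrivial W := Module.nontrivial_of_finrank_pos (R := K) (by omega)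
  obtain ⟨x, hx⟩ := exists_ne (0 : W)
  obtain ⟨y, hxy⟩ := exists_linearIndependent_pair_of_one_lt_finrank (R := K) (by omega) hx
  by_cases hy : (y : n → K) ⬝ᵥ y = 0
  · exact ⟨y, y.2, by simpa using hxy.ne_zero 1, hy⟩
  -- `(x + t • y) ⬝ᵥ (x + t • y)` is a quadratic polynomial in `t` with leading coefficient `y ⬝ᵥ y`
  obtain ⟨t, ht⟩ := IsAlgClosed.exists_root
    (C ((y : n → K) ⬝ᵥ y) * X ^ 2 + C (2 * ((x : n → K) ⬝ᵥ y)) * X + C ((x : n → K) ⬝ᵥ x))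
    (by rw [degree_quadratic hy]; decide)
  refine ⟨(x + t • y : W), (x + t • y).2, ?_, ?_⟩
  · rw [Ne, ZeroMemClass.coe_eq_zero]
    intro h
    simpa using LinearIndependent.pair_iff.mp hxy 1 t (by simpa using h)
  · simp only [IsRoot, eval_add, eval_mul, eval_C, eval_pow, eval_X] at ht
    rw [← ht]
    simp only [Submodule.coe_add, Submodule.coe_smul, add_dotProduct, dotProduct_add,
      smul_dotProduct, dotProduct_smul, dotProduct_comm (y : n → K) x, smul_eq_mul]
    ring

theorem Matrix.IsSymm.mulVec_dotProduct_mulVec {R n : Type*} [CommSemiring R] [Fintype n]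
    {B : Matrix n n R} (hB : B.IsSymm) (u : n → R) :
    B *ᵥ u ⬝ᵥ B *ᵥ u = u ⬝ᵥ (B * B) *ᵥ u := by
  rw [dotProduct_mulVec, ← mulVec_transpose, hB.eq, mulVec_mulVec, dotProduct_comm]

theorem Module.End.maxGenEigenspace_eq_eigenspace {K V : Type*} [Field K] [AddCommGroup V]
    [Module K V] {f : End K V} {μ : K}
    (h : LinearMap.ker ((f - μ • 1) ^ 2) ≤ LinearMap.ker (f - μ • 1)) :
    f.maxGenEigenspace μ = f.eigenspace μ := by
  refine le_antisymm (fun x hx => ?_) eigenspace_le_maxGenEigenspace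
  obtain ⟨k, hk⟩ := (f.mem_maxGenEigenspace μ x).mp hx
  have hstable := End.ker_pow_constant (f := f - μ • 1) (k := 1) <| by
    rw [pow_one, Nat.succ_eq_add_one, pow_two, End.mul_eq_comp] at *
    exact le_antisymm (LinearMap.ker_le_ker_comp _ _) h
  rw [eigenspace_def, ← pow_one (f - μ • 1)]
  rcases k with _ | k
  · simp_all
  · rw [hstable k, add_comm]
    exact hk

theorem Matrix.IsSymm.exists_isotropic_eigenvector_of_two_le_rootMultiplicity {K n : Type*}
    [Field K] [IsAlgClosed K] [Fintype n] [DecidableEq n] {A : Matrix n n K} (hA : A.IsSymm)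
    {α : K} (hmult : 2 ≤ A.charpoly.rootMultiplicity α) :
    ∃ v : n → K, v ≠ 0 ∧ A *ᵥ v = α • v ∧ v ⬝ᵥ v = 0 := by
  set f : End K (n → K) := toLin' A
  set B := A - α • 1
  have hBf : toLin' B = f - α • 1 := by simp [B, f, End.one_eq_id]
  by_cases hker : LinearMap.ker ((f - α • 1) ^ 2) ≤ LinearMap.ker (f - α • 1)
  · have hdim : 2 ≤ finrank K (f.eigenspace α) := by
      rwa [← End.maxGenEigenspace_eq_eigenspace hker, LinearMap.finrank_maxGenEigenspace_eq,
        charpoly_toLin']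
    obtain ⟨v, hv, hv0, hvv⟩ := (f.eigenspace α).exists_ne_zero_dotProduct_self_eq_zero hdim
    exact ⟨v, hv0, End.mem_eigenspace_iff.mp hv, hvv⟩
  · obtain ⟨u, hu2, hu1⟩ := SetLike.not_le_iff_exists.mp hker
    rw [← hBf, ← toLin'_pow, LinearMap.mem_ker, toLin'_apply, pow_two] at hu2
    rw [← hBf, LinearMap.mem_ker, toLin'_apply] at hu1
    refine ⟨B *ᵥ u, hu1, ?_, ?_⟩
    · have hBBu : (A - α • 1) *ᵥ (B *ᵥ u) = 0 := by rw [mulVec_mulVec, hu2]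
      rwa [sub_mulVec, smul_mulVec, one_mulVec, sub_eq_zero] at hBBu
    · have hB : B.IsSymm := hA.sub (isSymm_one.smul α)
      rw [hB.mulVec_dotProduct_mulVec, hu2, dotProduct_zero]

theorem multiple_root_gives_isotropic_eigenvector (A : Matrix (Fin 4) (Fin 4) ℂ)
    (hA : A.IsSymm) (α : ℂ) (hmult : 2 ≤ A.charpoly.rootMultiplicity α) :
    ∃ v : Fin 4 → ℂ, v ≠ 0 ∧ A *ᵥ v = α • v ∧ v ⬝ᵥ v = 0 :=
  hA.exists_isotropic_eigenvector_of_two_le_rootMultiplicity hmult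
end

section
/- Let A be a 4×4 symmetric matrix over ℂ whose characteristic polynomial has no multiple root (i.e. A has four distinct eigenvalues). Then for every nonzero eigenvector v of A (Av = μ·v for some μ ∈ ℂ, v ≠ 0), one has vᵀv ≠ 0. -/
/-!
Symmetry of `A` gives `vᵀ (A - μ) x = μ vᵀx - μ vᵀx = 0`, so `v` is orthogonal to the range of
`(A - μ)ᴺ` for every `N ≥ 1`. As `μ` is a simple root of the characteristic polynomial, the
generalized eigenspace `ker (A - μ)ᴺ` is the line through `v`. For `N` large these two subspaces
form the Fitting decomposition of the whole space, so `vᵀv = 0` would make `v` orthogonal to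
everything, i.e. `v = 0`.
-/

open Matrix

namespace Module.End

variable {K V : Type*} [Field K] [AddCommGroup V] [Module K V] [FiniteDimensional K V]

theorem maxGenEigenspace_eq_span_singleton {f : End K V} {μ : K} {v : V}
    (hμ : f.charpoly.rootMultiplicity μ ≤ 1) (hv : f.HasEigenvector μ v) :
    f.maxGenEigenspace μ = K ∙ v := by
  refine (Submodule.eq_of_le_of_finrank_le ?_ ?_).symm
  · exact (Submodule.span_singleton_le_iff_mem _ _).mpr (eigenspace_le_maxGenEigenspace hv.1)
  · rw [LinearMap.finrank_maxGenEigenspace_eq, finrank_span_singleton hv.2]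
    exact hμ

end Module.End

theorem Matrix.IsSymm.dotProduct_mulVec_of_mulVec_eq_smul {R n : Type*} [CommSemiring R]
    [Fintype n] {A : Matrix n n R} (hA : A.IsSymm) {v : n → R} {μ : R} (hv : A *ᵥ v = μ • v)
    (x : n → R) : v ⬝ᵥ (A *ᵥ x) = μ * (v ⬝ᵥ x) := by
  rw [dotProduct_mulVec, ← hA.eq, vecMul_transpose, hv, smul_dotProduct, smul_eq_mul]

theorem Matrix.IsSymm.dotProduct_self_ne_zero_of_rootMultiplicity_le_one {K n : Type*} [Field K]
    [Fintype n] [DecidableEq n] {A : Matrix n n K} (hA : A.IsSymm) {μ : K}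
    (hμ : A.charpoly.rootMultiplicity μ ≤ 1) {v : n → K} (hv : v ≠ 0) (hAv : A *ᵥ v = μ • v) :
    v ⬝ᵥ v ≠ 0 := by
  set g := toLin' A - μ • 1
  obtain ⟨N, hfitting, hN⟩ :=
    (g.eventually_isCompl_ker_pow_range_pow.and (Filter.eventually_gt_atTop 0)).exists
  have hker : LinearMap.ker (g ^ N) ≤ K ∙ v := by
    have hvec : Module.End.HasEigenvector (toLin' A) μ v :=
      ⟨Module.End.mem_eigenspace_iff.mpr (by rwa [toLin'_apply]), hv⟩
    rw [← Module.End.genEigenspace_nat, ← Module.End.maxGenEigenspace_eq_span_singleton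
      (by rwa [Matrix.charpoly_toLin']) hvec]
    exact Module.End.genEigenspace_le_maximal _ μ N
  have hrange : ∀ x ∈ LinearMap.range (g ^ N), v ⬝ᵥ x = 0 := by
    rintro _ ⟨y, rfl⟩
    obtain ⟨k, rfl⟩ := Nat.exists_eq_add_one.mpr hN
    rw [pow_succ', Module.End.mul_apply]
    simp [g, dotProduct_sub, hA.dotProduct_mulVec_of_mulVec_eq_smul hAv]
  intro hvv
  refine hv (dotProduct_eq_zero v fun w => ?_)
  obtain ⟨a, ha, b, hb, rfl⟩ :=
    Submodule.mem_sup.mp (hfitting.sup_eq_top ▸ Submodule.mem_top : w ∈ _ ⊔ _)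
  obtain ⟨c, rfl⟩ := Submodule.mem_span_singleton.mp (hker ha)
  rw [dotProduct_add, dotProduct_smul, hvv, hrange b hb, smul_zero, add_zero]

theorem distinct_eigenvalues_eigenvector_nonisotropic (A : Matrix (Fin 4) (Fin 4) ℂ)
    (hA : A.IsSymm) (hsq : ∀ α : ℂ, A.charpoly.rootMultiplicity α ≤ 1)
    (v : Fin 4 → ℂ) (hv : v ≠ 0) (μ : ℂ) (hμ : A *ᵥ v = μ • v) :
    v ⬝ᵥ v ≠ 0 :=
  hA.dotProduct_self_ne_zero_of_rootMultiplicity_le_one (hsq μ) hv hμ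
end

section
/- Let X and Y be 4×4 symmetric matrices over ℂ with X invertible. Then the characteristic polynomial of X⁻¹Y has no multiple root if and only if for every nonzero v ∈ ℂ⁴ with vᵀXv = 0 and vᵀYv = 0, the vectors Xv and Yv are linearly independent over ℂ (i.e. the common zero locus S_{(X,Y)} of the two quadrics is smooth away from the origin). -/
/-!
Let `M = X⁻¹ * Y`; it is self-adjoint for the nondegenerate symmetric form `B x y = xᵀ X y`.
A singular point of the intersection of the two quadrics is exactly a `B`-isotropic eigenvector
`v` of `M`: `X v` and `Y v` are dependent iff `M v = α v`, and then `vᵀ Y v = α vᵀ X v`.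
An eigenvalue `α` is a multiple root of the characteristic polynomial iff it has an isotropic
eigenvector. If the eigenspace has dimension at least two it contains an isotropic vector, as
`ℂ` is algebraically closed; if `(M - α)² w = 0 ≠ (M - α) w`, then `v = (M - α) w` satisfies
`B v v = B w ((M - α)² w) = 0`. Conversely, if an isotropic eigenvector `v` spans the eigenspace,
it is orthogonal to `ker (M - α)`, whose orthogonal is `range (M - α)`; so `v = (M - α) w` and
`α` has a Jordan block of size at least two.
-/

open Matrix Polynomial
open Module LinearMap

namespace Module.End

variable {K V : Type*} [Field K] [AddCommGroup V] [Module K V]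

theorem maxGenEigenspace_eq_eigenspace_s15 {f : End K V} {μ : K}
    (h : f.genEigenspace μ 2 ≤ f.eigenspace μ) : f.maxGenEigenspace μ = f.eigenspace μ := by
  have hstab : ker ((f - μ • 1) ^ 1) = ker ((f - μ • 1) ^ 2) := by
    rw [← genEigenspace_nat, ← genEigenspace_nat]
    exact le_antisymm (eigenspace_le_genEigenspace two_pos) h
  refine le_antisymm (fun x hx => ?_) (f.genEigenspace_le_maximal μ 1)
  obtain ⟨k, hk⟩ := (f.mem_maxGenEigenspace μ x).1 hx
  rw [eigenspace_def, ← pow_one (f - μ • 1), ker_pow_constant hstab k, mem_ker, add_comm,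
    pow_succ', mul_apply, hk, map_zero]

end Module.End

theorem LinearMap.IsSelfAdjoint.sub_smul_one {K V : Type*} [Field K] [AddCommGroup V]
    [Module K V] {B : LinearMap.BilinForm K V} {f : End K V} (hf : B.IsSelfAdjoint f) (μ : K) :
    B.IsSelfAdjoint ⇑(f - μ • 1 : End K V) := fun x y => by
  simp [hf x y]

namespace LinearMap.BilinForm

variable {K V : Type*} [Field K] [AddCommGroup V] [Module K V]
  {B : LinearMap.BilinForm K V} {f : End K V}

theorem exists_ne_zero_apply_self_eq_zero_of_one_lt_finrank [IsAlgClosed K]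
    (B : LinearMap.BilinForm K V) (h : 1 < finrank K V) : ∃ v, v ≠ 0 ∧ B v v = 0 := by
  have : Nontrivial V := Module.nontrivial_of_finrank_pos (R := K) (by omega)
  obtain ⟨w, hw⟩ := exists_ne (0 : V)
  by_cases hww : B w w = 0
  · exact ⟨w, hw, hww⟩
  obtain ⟨u, hwu⟩ := exists_linearIndependent_pair_of_one_lt_finrank h hw
  obtain ⟨t, ht⟩ := IsAlgClosed.exists_root (C (B w w) * X ^ 2 + C (B w u + B u w) * X + C (B u u))
    (by rw [degree_quadratic hww]; decide)
  refine ⟨t • w + u, fun h0 => ?_, ?_⟩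
  · simpa using (LinearIndependent.pair_iff.1 hwu t 1 (by simpa using h0)).2
  · simp only [IsRoot, eval_add, eval_mul, eval_C, eval_pow, eval_X] at ht
    simp only [map_add, map_smul, LinearMap.add_apply, LinearMap.smul_apply, smul_eq_mul]
    linear_combination ht

theorem range_eq_orthogonal_ker [FiniteDimensional K V] (hB : B.Nondegenerate)
    (hf : B.IsSelfAdjoint f) : range f = B.orthogonal (ker f) := by
  refine Submodule.eq_of_le_of_finrank_le ?_ ?_
  · rintro _ ⟨w, rfl⟩ u hu
    rw [← hf u w, mem_ker.1 hu, map_zero, LinearMap.zero_apply]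
  · rw [finrank_orthogonal hB, ← finrank_range_add_finrank_ker f]
    omega

theorem exists_mem_eigenspace_apply_self_eq_zero [IsAlgClosed K] (hf : B.IsSelfAdjoint f)
    {μ : K} (h : 2 ≤ finrank K (f.maxGenEigenspace μ)) :
    ∃ v ∈ f.eigenspace μ, v ≠ 0 ∧ B v v = 0 := by
  by_cases hstab : f.genEigenspace μ 2 ≤ f.eigenspace μ
  · rw [End.maxGenEigenspace_eq_eigenspace_s15 hstab] at h
    obtain ⟨v, hv0, hvv⟩ := (B.restrict _).exists_ne_zero_apply_self_eq_zero_of_one_lt_finrank h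
    exact ⟨v, v.2, by simpa using hv0, hvv⟩
  · obtain ⟨w, hw2, hw1⟩ := SetLike.not_le_iff_exists.1 hstab
    replace hw2 : ((f - μ • 1 : End K V) ^ 2) w = 0 := End.mem_genEigenspace_nat.1 hw2
    rw [End.eigenspace_def, mem_ker] at hw1
    refine ⟨(f - μ • 1) w, ?_, hw1, ?_⟩
    · rwa [End.eigenspace_def, mem_ker, ← End.mul_apply, ← sq]
    · rw [← hf.sub_smul_one μ, ← End.mul_apply, ← sq, hw2, map_zero, LinearMap.zero_apply]

theorem two_le_finrank_genEigenspace_of_apply_self_eq_zero [FiniteDimensional K V]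
    (hB : B.Nondegenerate) (hf : B.IsSelfAdjoint f) {μ : K} {v : V} (hv : v ∈ f.eigenspace μ)
    (hv0 : v ≠ 0) (hvv : B v v = 0) : 2 ≤ finrank K (f.genEigenspace μ 2) := by
  set g : End K V := f - μ • 1
  have hg : f.genEigenspace μ 2 = ker (g ^ 2) := End.genEigenspace_nat
  rw [End.eigenspace_def] at hv
  by_cases h : 2 ≤ finrank K (ker g)
  · rw [← End.eigenspace_def] at h
    exact h.trans (Submodule.finrank_mono (End.eigenspace_le_genEigenspace two_pos))
  have hker : K ∙ v = ker g := Submodule.eq_of_le_of_finrank_le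
    ((Submodule.span_singleton_le_iff_mem v _).2 hv) (by rw [finrank_span_singleton hv0]; omega)
  -- `v` is orthogonal to `ker g = K ∙ v`, hence lies in `range g`
  obtain ⟨w, rfl⟩ : v ∈ range g := by
    rw [range_eq_orthogonal_ker hB (hf.sub_smul_one μ), ← hker, mem_orthogonal_iff]
    intro u hu
    obtain ⟨c, rfl⟩ := Submodule.mem_span_singleton.1 hu
    simp [hvv]
  have hlt : ker g < ker (g ^ 2) := SetLike.lt_iff_le_and_exists.2
    ⟨ker_le_ker_comp g g, w, by rw [mem_ker, sq, End.mul_apply, mem_ker.1 hv], by rwa [mem_ker]⟩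
  have := Submodule.finrank_lt_finrank_of_lt hlt
  rw [← hker, finrank_span_singleton hv0] at this
  rw [hg]
  omega

theorem two_le_finrank_maxGenEigenspace_iff [IsAlgClosed K] [FiniteDimensional K V]
    (hB : B.Nondegenerate) (hf : B.IsSelfAdjoint f) (μ : K) :
    2 ≤ finrank K (f.maxGenEigenspace μ) ↔ ∃ v ∈ f.eigenspace μ, v ≠ 0 ∧ B v v = 0 :=
  ⟨exists_mem_eigenspace_apply_self_eq_zero hf, fun ⟨_, hv, hv0, hvv⟩ =>
    (two_le_finrank_genEigenspace_of_apply_self_eq_zero hB hf hv hv0 hvv).trans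
      (Submodule.finrank_mono (f.genEigenspace_le_maximal μ 2))⟩

end LinearMap.BilinForm

namespace Matrix

variable {K n : Type*} [Field K] [Fintype n] [DecidableEq n] {X Y : Matrix n n K}

theorem IsSymm.isSelfAdjoint_toLin'_inv_mul (hX : X.IsSymm) (hY : Y.IsSymm)
    (hXu : IsUnit X.det) : (toBilin' X).IsSelfAdjoint (toLin' (X⁻¹ * Y)) := fun x y => by
  have hXM : X * (X⁻¹ * Y) = Y := mul_nonsing_inv_cancel_left X Y hXu
  have hMX : (X⁻¹ * Y)ᵀ * X = Y := by
    rw [transpose_mul, transpose_nonsing_inv, hX.eq, hY.eq, Matrix.mul_assoc,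
      nonsing_inv_mul X hXu, Matrix.mul_one]
  rw [toBilin'_apply', toBilin'_apply', toLin'_apply, toLin'_apply, mulVec_mulVec, hXM,
    ← vecMul_transpose, ← dotProduct_mulVec, mulVec_mulVec, hMX]

theorem not_linearIndependent_mulVec_pair_iff (hXu : IsUnit X.det) {v : n → K} (hv : v ≠ 0) :
    ¬LinearIndependent K ![X *ᵥ v, Y *ᵥ v] ↔ ∃ α : K, (X⁻¹ * Y) *ᵥ v = α • v := by
  have hinj := mulVec_injective_iff_isUnit.2 ((isUnit_iff_isUnit_det X).2 hXu)
  rw [LinearIndependent.pair_iff' (hinj.ne_iff' (mulVec_zero X) |>.2 hv)]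
  push Not
  refine exists_congr fun α => ?_
  calc α • X *ᵥ v = Y *ᵥ v ↔ X *ᵥ (α • v) = X *ᵥ ((X⁻¹ * Y) *ᵥ v) := by
        rw [mulVec_mulVec, mul_nonsing_inv_cancel_left X Y hXu, mulVec_smul]
    _ ↔ (X⁻¹ * Y) *ᵥ v = α • v := hinj.eq_iff.trans eq_comm

end Matrix

theorem no_multiple_root_iff_smooth (X Y : Matrix (Fin 4) (Fin 4) ℂ)
    (hX : X.IsSymm) (hY : Y.IsSymm) (hXu : IsUnit X.det) :
    (∀ α : ℂ, (X⁻¹ * Y).charpoly.rootMultiplicity α ≤ 1) ↔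
      (∀ v : Fin 4 → ℂ, v ≠ 0 → v ⬝ᵥ (X *ᵥ v) = 0 → v ⬝ᵥ (Y *ᵥ v) = 0 →
        LinearIndependent ℂ ![X *ᵥ v, Y *ᵥ v]) := by
  have hB := BilinForm.nondegenerate_toBilin'_of_det_ne_zero' X hXu.ne_zero
  have hf := hX.isSelfAdjoint_toLin'_inv_mul hY hXu
  have hmult := BilinForm.two_le_finrank_maxGenEigenspace_iff hB hf
  simp_rw [← charpoly_toLin', ← finrank_maxGenEigenspace_eq]
  constructor
  · intro h v hv0 hXv hYv
    by_contra hdep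
    obtain ⟨α, hα⟩ := (not_linearIndependent_mulVec_pair_iff hXu hv0).1 hdep
    have := (hmult α).2 ⟨v, End.mem_eigenspace_iff.2 hα, hv0, by rwa [toBilin'_apply']⟩
    exact absurd (h α) (by omega)
  · intro h α
    by_contra! hα
    obtain ⟨v, hv, hv0, hXv⟩ := (hmult α).1 hα
    rw [toBilin'_apply'] at hXv
    have hMv : (X⁻¹ * Y) *ᵥ v = α • v := End.mem_eigenspace_iff.1 hv
    refine (not_linearIndependent_mulVec_pair_iff hXu hv0).2 ⟨α, hMv⟩ (h v hv0 hXv ?_)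
    rw [← mul_nonsing_inv_cancel_left X Y hXu, ← mulVec_mulVec, hMv, mulVec_smul,
      dotProduct_smul, hXv, smul_zero]
end

section
/- Let X and Y be 4×4 complex matrices, and write the characteristic polynomial of a 4×4 matrix M as det(t·I₄ − M) = t⁴ − c₁(M)t³ + c₂(M)t² − c₃(M)t + c₄(M). Then for all s, t ∈ ℂ: det(sX + tY) = det(X)·s⁴ + c₃₁·s³t + c₂₂·s²t² + c₁₃·st³ + det(Y)·t⁴, where c₃₁ = c₃(X)tr(Y) − c₂(X)tr(XY) + tr(X²Y)tr(X) − tr(X³Y), c₂₂ = c₂(X)c₂(Y) + c₂(XY) − tr(X²Y²) + tr(X²Y)tr(Y) + tr(XY²)tr(X) − tr(XY)tr(X)tr(Y), and c₁₃ = c₃(Y)tr(X) − c₂(Y)tr(XY) + tr(XY²)tr(Y) − tr(XY³). -/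
/-!
Every quantity in the identity is a polynomial in `s`, `t` and the 32 entries of `X` and `Y`:
determinants by cofactor expansion, the coefficients of the characteristic polynomial as sums
of principal minors, traces of products by multiplying out. Expanded this way, both sides agree
as polynomials with integer coefficients.
-/

open Polynomial

namespace Matrix
variable {R : Type*} [CommRing R] (A : Matrix (Fin 4) (Fin 4) R)

theorem trace_fin_four : A.trace = A 0 0 + A 1 1 + A 2 2 + A 3 3 := by
  simp [trace, Fin.sum_univ_four]

theorem det_fin_four :
    A.det =
      A 0 0 * A 1 1 * A 2 2 * A 3 3 - A 0 0 * A 1 1 * A 2 3 * A 3 2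
      - A 0 0 * A 1 2 * A 2 1 * A 3 3 + A 0 0 * A 1 2 * A 2 3 * A 3 1
      + A 0 0 * A 1 3 * A 2 1 * A 3 2 - A 0 0 * A 1 3 * A 2 2 * A 3 1
      - A 0 1 * A 1 0 * A 2 2 * A 3 3 + A 0 1 * A 1 0 * A 2 3 * A 3 2
      + A 0 1 * A 1 2 * A 2 0 * A 3 3 - A 0 1 * A 1 2 * A 2 3 * A 3 0
      - A 0 1 * A 1 3 * A 2 0 * A 3 2 + A 0 1 * A 1 3 * A 2 2 * A 3 0
      + A 0 2 * A 1 0 * A 2 1 * A 3 3 - A 0 2 * A 1 0 * A 2 3 * A 3 1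
      - A 0 2 * A 1 1 * A 2 0 * A 3 3 + A 0 2 * A 1 1 * A 2 3 * A 3 0
      + A 0 2 * A 1 3 * A 2 0 * A 3 1 - A 0 2 * A 1 3 * A 2 1 * A 3 0
      - A 0 3 * A 1 0 * A 2 1 * A 3 2 + A 0 3 * A 1 0 * A 2 2 * A 3 1
      + A 0 3 * A 1 1 * A 2 0 * A 3 2 - A 0 3 * A 1 1 * A 2 2 * A 3 0
      - A 0 3 * A 1 2 * A 2 0 * A 3 1 + A 0 3 * A 1 2 * A 2 1 * A 3 0 := by
  simp only [det_succ_row_zero A, det_fin_three, Fin.sum_univ_four, submatrix_apply, Fin.succAbove,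
    Fin.reduceSucc, Fin.reduceCastSucc, Fin.reduceLT, ↓reduceIte, Fin.coe_ofNat_eq_mod]
  ring

theorem charpoly_fin_four :
    A.charpoly = X ^ 4 - C A.trace * X ^ 3
      + C ((A.submatrix ![0, 1] ![0, 1]).det + (A.submatrix ![0, 2] ![0, 2]).det
        + (A.submatrix ![0, 3] ![0, 3]).det + (A.submatrix ![1, 2] ![1, 2]).det
        + (A.submatrix ![1, 3] ![1, 3]).det + (A.submatrix ![2, 3] ![2, 3]).det) * X ^ 2
      - C ((A.submatrix ![1, 2, 3] ![1, 2, 3]).det + (A.submatrix ![0, 2, 3] ![0, 2, 3]).det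
        + (A.submatrix ![0, 1, 3] ![0, 1, 3]).det + (A.submatrix ![0, 1, 2] ![0, 1, 2]).det) * X
      + C A.det := by
  rw [charpoly, det_fin_four, det_fin_four A, trace_fin_four]
  simp only [det_fin_two, det_fin_three, submatrix_apply, cons_val, charmatrix_apply_eq,
    charmatrix_apply_ne, ne_eq, Fin.reduceEq, not_false_eq_true, map_add, map_sub, map_mul]
  ring

theorem charpoly_coeff_two_fin_four :
    A.charpoly.coeff 2 =
      (A.submatrix ![0, 1] ![0, 1]).det + (A.submatrix ![0, 2] ![0, 2]).det
        + (A.submatrix ![0, 3] ![0, 3]).det + (A.submatrix ![1, 2] ![1, 2]).det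
        + (A.submatrix ![1, 3] ![1, 3]).det + (A.submatrix ![2, 3] ![2, 3]).det := by
  rw [charpoly_fin_four]
  simp only [coeff_add, coeff_sub, coeff_C_mul, coeff_X_pow, coeff_X, coeff_C]
  norm_num

theorem charpoly_coeff_one_fin_four :
    A.charpoly.coeff 1 =
      -((A.submatrix ![1, 2, 3] ![1, 2, 3]).det + (A.submatrix ![0, 2, 3] ![0, 2, 3]).det
        + (A.submatrix ![0, 1, 3] ![0, 1, 3]).det + (A.submatrix ![0, 1, 2] ![0, 1, 2]).det) := by
  rw [charpoly_fin_four]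
  simp only [coeff_add, coeff_sub, coeff_C_mul, coeff_X_pow, coeff_X, coeff_C]
  norm_num

end Matrix

open Matrix Polynomial

theorem det_pencil_expansion (X Y : Matrix (Fin 4) (Fin 4) ℂ) :
    ∀ s t : ℂ,
      (s • X + t • Y).det =
        X.det * s^4
        + ((-X.charpoly.coeff 1) * Y.trace - X.charpoly.coeff 2 * (X * Y).trace
            + (X^2 * Y).trace * X.trace - (X^3 * Y).trace) * s^3 * t
        + (X.charpoly.coeff 2 * Y.charpoly.coeff 2 + (X * Y).charpoly.coeff 2
            - (X^2 * Y^2).trace + (X^2 * Y).trace * Y.trace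
            + (X * Y^2).trace * X.trace - (X * Y).trace * X.trace * Y.trace) * s^2 * t^2
        + ((-Y.charpoly.coeff 1) * X.trace - Y.charpoly.coeff 2 * (X * Y).trace
            + (X * Y^2).trace * Y.trace - (X * Y^3).trace) * s * t^3
        + Y.det * t^4 := by
  intro s t
  simp only [charpoly_coeff_one_fin_four, charpoly_coeff_two_fin_four, det_fin_two, det_fin_three,
    det_fin_four, submatrix_apply, trace_fin_four, sq, pow_three, mul_apply, Fin.sum_univ_four,
    Matrix.add_apply, Matrix.smul_apply, smul_eq_mul, cons_val]
  ring
end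

section
/- Let λ₀, λ₁, λ₂, λ₃ be four distinct complex numbers, and set M = (λ₁ − λ₃)/(λ₀ − λ₃) and N = (λ₁ − λ₂)/(λ₀ − λ₂). Let a, b, c, d denote the elementary symmetric polynomials of λ₀, λ₁, λ₂, λ₃ of degrees 1, 2, 3, 4 respectively, and let Δ = ∏_{0 ≤ i < j ≤ 3} (λᵢ − λⱼ)². Then (N² − MN + M²)³ · Δ = (1728d³ − 1296acd² + 432b²d² + 324a²c²d − 216ab²cd + 36b⁴d − 27a³c³ + 27a²b²c² − 9ab⁴c + b⁶) · M²N²(N − M)². Equivalently, 256(N² − MN + M²)³/(M²N²(N − M)²) equals 256(1728d³ − 1296acd² + 432b²d² + 324a²c²d − 216ab²cd + 36b⁴d − 27a³c³ + 27a²b²c² − 9ab⁴c + b⁶)/Δ. -/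
/-!
Write `x = (λ₁ - λ₂)(λ₀ - λ₃)`, `y = (λ₁ - λ₃)(λ₀ - λ₂)` and `D = (λ₀ - λ₂)(λ₀ - λ₃)`, so that
`N = x / D` and `M = y / D`. Then `(N² - MN + M²) D² = x² - xy + y²`, which is the classical
invariant `I = b² - 3ac + 12d` of the quartic, and the polynomial in `a, b, c, d` on the right is `I³`. Moreover
`xy(x - y)` is, up to sign, the product of all root differences, so `Δ = (MN(N - M))² D⁶`.
Both sides of the identity thus have weight zero in `D`, and `D` cancels.
-/

section CommRing

variable {R : Type*} [CommRing R]

theorem quartic_invariant_cube (a b c d : R) :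
    (b^2 - 3*a*c + 12*d)^3 =
      1728*d^3 - 1296*a*c*d^2 + 432*b^2*d^2 + 324*a^2*c^2*d - 216*a*b^2*c*d + 36*b^4*d
        - 27*a^3*c^3 + 27*a^2*b^2*c^2 - 9*a*b^4*c + b^6 := by
  ring

theorem quartic_invariant_eq_of_roots (l0 l1 l2 l3 : R) :
    ((l1-l2)*(l0-l3))^2 - (l1-l2)*(l0-l3)*((l1-l3)*(l0-l2)) + ((l1-l3)*(l0-l2))^2 =
      (l0*l1 + l0*l2 + l0*l3 + l1*l2 + l1*l3 + l2*l3)^2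
        - 3*(l0 + l1 + l2 + l3)*(l0*l1*l2 + l0*l1*l3 + l0*l2*l3 + l1*l2*l3)
        + 12*(l0*l1*l2*l3) := by
  ring

theorem discriminant_eq_sq_of_roots (l0 l1 l2 l3 : R) :
    (l0-l1)^2 * (l0-l2)^2 * (l0-l3)^2 * (l1-l2)^2 * (l1-l3)^2 * (l2-l3)^2 =
      ((l1-l2)*(l0-l3) * ((l1-l3)*(l0-l2)) * ((l1-l2)*(l0-l3) - (l1-l3)*(l0-l2)))^2 := by
  ring

end CommRing

theorem j_invariant_formula_general (l0 l1 l2 l3 : ℂ)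
    (h02 : l0 ≠ l2) (h03 : l0 ≠ l3)
    (M N a b c d Δ : ℂ)
    (hM : M = (l1 - l3) / (l0 - l3)) (hN : N = (l1 - l2) / (l0 - l2))
    (ha : a = l0 + l1 + l2 + l3)
    (hb : b = l0*l1 + l0*l2 + l0*l3 + l1*l2 + l1*l3 + l2*l3)
    (hc : c = l0*l1*l2 + l0*l1*l3 + l0*l2*l3 + l1*l2*l3)
    (hd : d = l0*l1*l2*l3)
    (hΔ : Δ = (l0-l1)^2 * (l0-l2)^2 * (l0-l3)^2 * (l1-l2)^2 * (l1-l3)^2 * (l2-l3)^2) :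
    (N^2 - M*N + M^2)^3 * Δ =
      (1728*d^3 - 1296*a*c*d^2 + 432*b^2*d^2 + 324*a^2*c^2*d - 216*a*b^2*c*d + 36*b^4*d
        - 27*a^3*c^3 + 27*a^2*b^2*c^2 - 9*a*b^4*c + b^6) * (M^2 * N^2 * (N - M)^2) ∧
    256 * (N^2 - M*N + M^2)^3 / (M^2 * N^2 * (N - M)^2) =
      256 * (1728*d^3 - 1296*a*c*d^2 + 432*b^2*d^2 + 324*a^2*c^2*d - 216*a*b^2*c*d + 36*b^4*d
        - 27*a^3*c^3 + 27*a^2*b^2*c^2 - 9*a*b^4*c + b^6) / Δ := by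
  rw [← quartic_invariant_cube]
  set D := (l0 - l2) * (l0 - l3)
  have hD : D ≠ 0 := mul_ne_zero (sub_ne_zero.mpr h02) (sub_ne_zero.mpr h03)
  have hI : (N^2 - M*N + M^2) * D^2 = b^2 - 3*a*c + 12*d := by
    rw [ha, hb, hc, hd, ← quartic_invariant_eq_of_roots, hM, hN]
    field_simp
    ring
  have hΔD : Δ = (M * N * (N - M))^2 * D^6 := by
    rw [hΔ, discriminant_eq_sq_of_roots, hM, hN]
    field_simp
    ring
  rw [← hI, hΔD]
  refine ⟨by ring, ?_⟩
  calc 256 * (N^2 - M*N + M^2)^3 / (M^2 * N^2 * (N - M)^2)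
      = 256 * (N^2 - M*N + M^2)^3 * D^6 / ((M * N * (N - M))^2 * D^6) := by
        rw [mul_div_mul_right _ _ (pow_ne_zero 6 hD)]; ring
    _ = 256 * ((N^2 - M*N + M^2) * D^2)^3 / ((M * N * (N - M))^2 * D^6) := by ring

theorem j_invariant_formula (l0 l1 l2 l3 : ℂ)
    (h01 : l0 ≠ l1) (h02 : l0 ≠ l2) (h03 : l0 ≠ l3)
    (h12 : l1 ≠ l2) (h13 : l1 ≠ l3) (h23 : l2 ≠ l3)
    (M N a b c d Δ : ℂ)
    (hM : M = (l1 - l3) / (l0 - l3)) (hN : N = (l1 - l2) / (l0 - l2))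
    (ha : a = l0 + l1 + l2 + l3)
    (hb : b = l0*l1 + l0*l2 + l0*l3 + l1*l2 + l1*l3 + l2*l3)
    (hc : c = l0*l1*l2 + l0*l1*l3 + l0*l2*l3 + l1*l2*l3)
    (hd : d = l0*l1*l2*l3)
    (hΔ : Δ = (l0-l1)^2 * (l0-l2)^2 * (l0-l3)^2 * (l1-l2)^2 * (l1-l3)^2 * (l2-l3)^2) :
    (N^2 - M*N + M^2)^3 * Δ =
      (1728*d^3 - 1296*a*c*d^2 + 432*b^2*d^2 + 324*a^2*c^2*d - 216*a*b^2*c*d + 36*b^4*d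
        - 27*a^3*c^3 + 27*a^2*b^2*c^2 - 9*a*b^4*c + b^6) * (M^2 * N^2 * (N - M)^2) ∧
    256 * (N^2 - M*N + M^2)^3 / (M^2 * N^2 * (N - M)^2) =
      256 * (1728*d^3 - 1296*a*c*d^2 + 432*b^2*d^2 + 324*a^2*c^2*d - 216*a*b^2*c*d + 36*b^4*d
        - 27*a^3*c^3 + 27*a^2*b^2*c^2 - 9*a*b^4*c + b^6) / Δ :=
  j_invariant_formula_general l0 l1 l2 l3 h02 h03 M N a b c d Δ hM hN ha hb hc hd hΔ
end
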